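/- There exist ε₀ > 0 and C ≥ 0, depending only on h, such that for every ε with |ε| < ε₀ and every L ≥ C|ε|, the self-consistent transfer operator T_ε maps B_L into itself: for every φ ∈ B_L, the function T_ε φ = P(L_{ε,φ}φ) is 1-periodic, nonnegative, Lipschitz with constant L, and satisfies ∫₀¹ T_ε φ = 1. -/

import Mathlib

open MeasureTheory

/-- The coupled map `g_{ε,φ}(x) = x + ε ∫₀¹ h(x,y) φ(y) dy`. -/
noncomputable def gmap (h : ℝ → ℝ → ℝ) (ε : ℝ) (φ : ℝ → ℝ) : ℝ → ℝ :=
  fun x => x + ε * ∫ y in (0:ℝ)..1, h x y * φ y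

/-- The transfer operator of `g_{ε,φ}` applied to `u`: `(u / g') ∘ g⁻¹`. -/
noncomputable def Lop (h : ℝ → ℝ → ℝ) (ε : ℝ) (φ u : ℝ → ℝ) : ℝ → ℝ :=
  fun x => u (Function.invFun (gmap h ε φ) x) /
    deriv (gmap h ε φ) (Function.invFun (gmap h ε φ) x)

/-- The transfer operator of the doubling map. -/
noncomputable def Pop (ψ : ℝ → ℝ) : ℝ → ℝ :=
  fun x => (1/2) * ψ (x/2) + (1/2) * ψ ((x+1)/2)

/-- The self-consistent transfer operator `T_ε φ = P (L_{ε,φ} φ)`. -/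
noncomputable def Tsc (h : ℝ → ℝ → ℝ) (ε : ℝ) (φ : ℝ → ℝ) : ℝ → ℝ :=
  Pop (Lop h ε φ φ)

/-- `h` is 1-periodic in each variable. -/
def periodicH (h : ℝ → ℝ → ℝ) : Prop :=
  (∀ x y, h (x+1) y = h x y) ∧ (∀ x y, h x (y+1) = h x y)

/-- `B_L`: 1-periodic, nonnegative, `L`-Lipschitz densities with `∫₀¹ φ = 1`. -/
def memB (L : ℝ) (φ : ℝ → ℝ) : Prop :=
  (∀ x, φ (x+1) = φ x) ∧ (∀ x, 0 ≤ φ x) ∧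
  (∀ x y, |φ x - φ y| ≤ L * |x - y|) ∧ (∫ x in (0:ℝ)..1, φ x) = 1

/-!
For `φ ∈ B_L` the coupled map `g = g_{ε,φ}` is the lift of a degree-one circle map whose
derivative satisfies `|g' - 1| ≤ |ε| M` and `Lip(g') ≤ |ε| M`, where `M` bounds `∂ₓh` and its
Lipschitz constant (finite by periodicity). So for small `ε` the map `g` is a bijection with
`10/9`-Lipschitz inverse, and its transfer operator preserves periodicity, positivity and mass
(change of variables over one period). Writing `L_{ε,φ}φ = (φ / g') ∘ g⁻¹`, the quotient rule bounds
its Lipschitz constant by `(10/9)² L + (10/9)³ |ε| M (1 + L) ≤ 2L` once `|ε| M (1 + L) ≤ L/5`, using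
`φ ≤ 1 + L`. Finally the doubling operator `P` halves Lipschitz constants and preserves `∫₀¹`.
-/

open Function

section Densities

lemma Function.Periodic.apply_fract {α : Type*} {f : ℝ → α} (hf : Periodic f 1) (x : ℝ) :
    f (Int.fract x) = f x := by
  have := hf.sub_int_mul_eq (x := x) ⌊x⌋
  rwa [mul_one] at this

lemma continuous_of_abs_sub_le {f : ℝ → ℝ} {L : ℝ}
    (hf : ∀ x y, |f x - f y| ≤ L * |x - y|) : Continuous f :=
  (LipschitzWith.of_dist_le' fun x y => by simpa only [Real.dist_eq] using hf x y).continuous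

variable {L : ℝ} {φ : ℝ → ℝ}

lemma memB.continuous (hφ : memB L φ) : Continuous φ :=
  continuous_of_abs_sub_le hφ.2.2.1

lemma memB.lipschitz_const_nonneg (hφ : memB L φ) : 0 ≤ L := by
  simpa using (abs_nonneg _).trans (hφ.2.2.1 1 0)

lemma memB.le_one_add (hφ : memB L φ) (x : ℝ) : φ x ≤ 1 + L := by
  rw [← (show Periodic φ 1 from hφ.1).apply_fract]
  have hx : Int.fract x ∈ Set.Icc (0 : ℝ) 1 := ⟨Int.fract_nonneg x, (Int.fract_lt_one x).le⟩
  have hlow : ∀ y ∈ Set.Icc (0 : ℝ) 1, φ (Int.fract x) - L ≤ φ y := fun y hy => by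
    have hdist : |Int.fract x - y| ≤ 1 :=
      abs_sub_le_iff.2 ⟨by linarith [hx.2, hy.1], by linarith [hx.1, hy.2]⟩
    nlinarith [(abs_le.1 (hφ.2.2.1 (Int.fract x) y)).2, hφ.lipschitz_const_nonneg]
  have := intervalIntegral.integral_mono_on zero_le_one (intervalIntegrable_const (μ := volume))
    (hφ.continuous.intervalIntegrable 0 1) hlow
  rw [intervalIntegral.integral_const, hφ.2.2.2] at this
  simp only [sub_zero, one_smul] at this
  linarith

lemma abs_integral_mul_le {u : ℝ → ℝ} {K : ℝ} (hφ0 : ∀ y, 0 ≤ φ y)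
    (hφ : Continuous φ) (hφ1 : ∫ y in (0:ℝ)..1, φ y = 1) (hu : Continuous u)
    (huK : ∀ y, |u y| ≤ K) :
    |∫ y in (0:ℝ)..1, u y * φ y| ≤ K :=
  calc |∫ y in (0:ℝ)..1, u y * φ y| ≤ ∫ y in (0:ℝ)..1, |u y * φ y| :=
        intervalIntegral.abs_integral_le_integral_abs (μ := volume) zero_le_one
    _ ≤ ∫ y in (0:ℝ)..1, K * φ y := by
        refine intervalIntegral.integral_mono_on zero_le_one
          ((hu.mul hφ).abs.intervalIntegrable _ _)
          ((continuous_const.mul hφ).intervalIntegrable _ _) fun y _ => ?_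
        rw [abs_mul, abs_of_nonneg (hφ0 y)]
        exact mul_le_mul_of_nonneg_right (huK y) (hφ0 y)
    _ = K := by rw [intervalIntegral.integral_const_mul, hφ1, mul_one]

end Densities

section Doubling

lemma integral_Pop {ψ : ℝ → ℝ} (hψ : Continuous ψ) :
    ∫ x in (0:ℝ)..1, Pop ψ x = ∫ x in (0:ℝ)..1, ψ x := by
  have hleft : ∫ x in (0:ℝ)..1, ψ (x / 2) = 2 * ∫ x in (0:ℝ)..1/2, ψ x := by
    rw [intervalIntegral.integral_comp_div ψ two_ne_zero]
    norm_num
  have hright : ∫ x in (0:ℝ)..1, ψ ((x + 1) / 2) = 2 * ∫ x in (1/2:ℝ)..1, ψ x := by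
    rw [intervalIntegral.integral_comp_add_right (fun x => ψ (x / 2)),
      intervalIntegral.integral_comp_div ψ two_ne_zero]
    norm_num
  have hc₁ : Continuous fun x : ℝ => ψ (x / 2) := by fun_prop
  have hc₂ : Continuous fun x : ℝ => ψ ((x + 1) / 2) := by fun_prop
  simp only [Pop]
  rw [intervalIntegral.integral_add (f := fun x => 1 / 2 * ψ (x / 2))
      (g := fun x => 1 / 2 * ψ ((x + 1) / 2)) ((continuous_const.mul hc₁).intervalIntegrable _ _)
      ((continuous_const.mul hc₂).intervalIntegrable _ _),
    intervalIntegral.integral_const_mul, intervalIntegral.integral_const_mul, hleft, hright,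
    ← intervalIntegral.integral_add_adjacent_intervals (hψ.intervalIntegrable 0 (1/2))
      (hψ.intervalIntegrable (1/2) 1)]
  ring

lemma memB_Pop {L : ℝ} {ψ : ℝ → ℝ} (hψ : memB (2 * L) ψ) : memB L (Pop ψ) := by
  obtain ⟨hper, hnonneg, hlip, hint⟩ := hψ
  refine ⟨fun x => ?_, fun x => ?_, fun x y => ?_, ?_⟩
  · simp only [Pop, show (x + 1 + 1) / 2 = x / 2 + 1 by ring, hper]
    ring
  · simp only [Pop]
    nlinarith [hnonneg (x / 2), hnonneg ((x + 1) / 2)]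
  · have h₁ := hlip (x / 2) (y / 2)
    have h₂ := hlip ((x + 1) / 2) ((y + 1) / 2)
    rw [show x / 2 - y / 2 = (x - y) / 2 by ring, abs_div, abs_two] at h₁
    rw [show (x + 1) / 2 - (y + 1) / 2 = (x - y) / 2 by ring, abs_div, abs_two] at h₂
    calc |Pop ψ x - Pop ψ y|
        = |(ψ (x / 2) - ψ (y / 2)) / 2 + (ψ ((x + 1) / 2) - ψ ((y + 1) / 2)) / 2| := by
          simp only [Pop]; congr 1; ring
      _ ≤ |ψ (x / 2) - ψ (y / 2)| / 2 + |ψ ((x + 1) / 2) - ψ ((y + 1) / 2)| / 2 :=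
          (abs_add_le _ _).trans_eq (by rw [abs_div, abs_div, abs_two])
      _ ≤ L * |x - y| := by linarith
  · rw [integral_Pop (continuous_of_abs_sub_le hlip), hint]

end Doubling

section TransferOperator

noncomputable def transferOp (g u : ℝ → ℝ) : ℝ → ℝ :=
  fun x => u (invFun g x) / deriv g (invFun g x)

lemma Lop_eq_transferOp (h : ℝ → ℝ → ℝ) (ε : ℝ) (φ u : ℝ → ℝ) :
    Lop h ε φ u = transferOp (gmap h ε φ) u := rfl

variable {g : ℝ → ℝ}

lemma mul_abs_sub_le_abs_sub {c : ℝ} (hg : Differentiable ℝ g) (hgc : ∀ x, c ≤ deriv g x)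
    (x y : ℝ) : c * |x - y| ≤ |g x - g y| := by
  rcases le_total y x with hyx | hxy
  · rw [abs_of_nonneg (sub_nonneg.2 hyx)]
    exact (mul_sub_le_image_sub_of_le_deriv hg hgc hyx).trans (le_abs_self _)
  · rw [abs_sub_comm, abs_sub_comm (g x), abs_of_nonneg (sub_nonneg.2 hxy)]
    exact (mul_sub_le_image_sub_of_le_deriv hg hgc hxy).trans (le_abs_self _)

lemma bijective_of_deriv_pos_of_map_add_one (hg : Differentiable ℝ g)
    (hpos : ∀ x, 0 < deriv g x) (h1 : ∀ x, g (x + 1) = g x + 1) : Bijective g :=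
  have hmono := strictMono_of_deriv_pos hpos
  ⟨hmono.injective,
    (CircleDeg1Lift.mk ⟨g, hmono.monotone⟩ h1).continuous_iff_surjective.1 hg.continuous⟩

lemma abs_invFun_sub_le {c : ℝ} (hc : 0 < c) (hg : Differentiable ℝ g)
    (hgc : ∀ x, c ≤ deriv g x) (hsurj : Surjective g) (u v : ℝ) :
    |invFun g u - invFun g v| ≤ c⁻¹ * |u - v| := by
  rw [le_inv_mul_iff₀ hc]
  simpa only [invFun_eq (hsurj u), invFun_eq (hsurj v)] using
    mul_abs_sub_le_abs_sub hg hgc (invFun g u) (invFun g v)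

lemma invFun_add_one (hg : Bijective g) (h1 : ∀ x, g (x + 1) = g x + 1) (x : ℝ) :
    invFun g (x + 1) = invFun g x + 1 :=
  hg.1 (by rw [h1, invFun_eq (hg.2 _), invFun_eq (hg.2 _)])

lemma deriv_add_one (h1 : ∀ x, g (x + 1) = g x + 1) (x : ℝ) :
    deriv g (x + 1) = deriv g x := by
  rw [← deriv_comp_add_const, funext h1, deriv_add_const]

lemma transferOp_add_one (hg : Bijective g) (h1 : ∀ x, g (x + 1) = g x + 1) {u : ℝ → ℝ}
    (hu : ∀ x, u (x + 1) = u x) (x : ℝ) : transferOp g u (x + 1) = transferOp g u x := by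
  simp only [transferOp, invFun_add_one hg h1, hu, deriv_add_one h1]

lemma integral_transferOp {c : ℝ} (hc : 0 < c) (hg : Differentiable ℝ g)
    (hgc : ∀ x, c ≤ deriv g x) (hg' : Continuous (deriv g)) (h1 : ∀ x, g (x + 1) = g x + 1)
    {u : ℝ → ℝ} (hu : Continuous u) (hu1 : Periodic u 1) :
    ∫ x in (0:ℝ)..1, transferOp g u x = ∫ x in (0:ℝ)..1, u x := by
  have hpos x : 0 < deriv g x := hc.trans_le (hgc x)
  have hbij := bijective_of_deriv_pos_of_map_add_one hg hpos h1
  have hinv : Continuous (invFun g) :=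
    continuous_of_abs_sub_le (abs_invFun_sub_le hc hg hgc hbij.2)
  have hcont : Continuous (transferOp g u) :=
    (hu.comp hinv).div (hg'.comp hinv) fun x => (hpos _).ne'
  set a := invFun g 0
  have hga : g a = 0 := invFun_eq (hbij.2 0)
  have hsubst := intervalIntegral.integral_comp_mul_deriv (a := a) (b := a + 1)
    (fun x _ => (hg x).hasDerivAt) hg'.continuousOn hcont
  rw [h1, hga, zero_add] at hsubst
  have hshift := hu1.intervalIntegral_add_eq a 0
  rw [zero_add] at hshift
  rw [← hsubst, ← hshift]
  refine intervalIntegral.integral_congr fun x _ => ?_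
  simp only [comp_apply, transferOp, leftInverse_invFun hbij.1 x]
  exact div_mul_cancel₀ _ (hpos x).ne'

lemma abs_transferOp_sub_le (hg : Differentiable ℝ g) (hgc : ∀ x, 9 / 10 ≤ deriv g x)
    (hsurj : Surjective g) {δ L : ℝ} {φ : ℝ → ℝ}
    (hδ : ∀ x y, |deriv g x - deriv g y| ≤ δ * |x - y|) (hφ : memB L φ)
    (hδL : δ * (1 + L) ≤ L / 5) (x y : ℝ) :
    |transferOp g φ x - transferOp g φ y| ≤ 2 * L * |x - y| := by
  set a := invFun g x
  set b := invFun g y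
  have hab : |a - b| ≤ 10 / 9 * |x - y| := by
    have := abs_invFun_sub_le (by norm_num) hg hgc hsurj x y
    norm_num at this
    exact this
  have hL := hφ.lipschitz_const_nonneg
  have hDa := hgc a
  have hDb := hgc b
  have hφb : |φ b| ≤ 1 + L := by rw [abs_of_nonneg (hφ.2.1 b)]; exact hφ.le_one_add b
  have hDab : |deriv g b - deriv g a| ≤ δ * |a - b| := by rw [abs_sub_comm]; exact hδ a b
  have hsplit : transferOp g φ x - transferOp g φ y = (φ a - φ b) / deriv g a
      + φ b * (deriv g b - deriv g a) / (deriv g a * deriv g b) := by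
    show φ a / deriv g a - φ b / deriv g b = _
    field_simp
    ring
  have hfirst : |(φ a - φ b) / deriv g a| ≤ 10 / 9 * (L * |a - b|) := by
    have hpos : 0 < deriv g a := by linarith
    rw [abs_div, abs_of_pos hpos, div_le_iff₀ hpos]
    nlinarith [hφ.2.2.1 a b, mul_nonneg hL (abs_nonneg (a - b))]
  have hsecond : |φ b * (deriv g b - deriv g a) / (deriv g a * deriv g b)|
      ≤ 100 / 81 * (L / 5 * |a - b|) := by
    have hDD : 81 / 100 ≤ deriv g a * deriv g b := by nlinarith
    have hpos : 0 < deriv g a * deriv g b := by linarith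
    rw [abs_div, abs_mul, abs_of_pos hpos, div_le_iff₀ hpos]
    calc |φ b| * |deriv g b - deriv g a| ≤ (1 + L) * (δ * |a - b|) :=
          mul_le_mul hφb hDab (abs_nonneg _) (by linarith)
      _ ≤ L / 5 * |a - b| := by nlinarith [abs_nonneg (a - b)]
      _ ≤ 100 / 81 * (L / 5 * |a - b|) * (deriv g a * deriv g b) := by
          nlinarith [mul_nonneg hL (abs_nonneg (a - b))]
  calc |transferOp g φ x - transferOp g φ y|
      ≤ |(φ a - φ b) / deriv g a|
        + |φ b * (deriv g b - deriv g a) / (deriv g a * deriv g b)| :=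
        hsplit ▸ abs_add_le _ _
    _ ≤ 10 / 9 * (L * |a - b|) + 100 / 81 * (L / 5 * |a - b|) := add_le_add hfirst hsecond
    _ = 110 / 81 * (L * |a - b|) := by ring
    _ ≤ 110 / 81 * (L * (10 / 9 * |x - y|)) := by gcongr
    _ ≤ 2 * L * |x - y| := by nlinarith [mul_nonneg hL (abs_nonneg (x - y))]

lemma memB_transferOp (hg : Differentiable ℝ g) (hgc : ∀ x, 9 / 10 ≤ deriv g x) {δ L : ℝ}
    {φ : ℝ → ℝ} (hδ : ∀ x y, |deriv g x - deriv g y| ≤ δ * |x - y|)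
    (h1 : ∀ x, g (x + 1) = g x + 1) (hφ : memB L φ) (hδL : δ * (1 + L) ≤ L / 5) :
    memB (2 * L) (transferOp g φ) := by
  have hbij := bijective_of_deriv_pos_of_map_add_one hg (fun x => by linarith [hgc x]) h1
  refine ⟨transferOp_add_one hbij h1 hφ.1,
    fun x => div_nonneg (hφ.2.1 _) (by linarith [hgc (invFun g x)]),
    abs_transferOp_sub_le hg hgc hbij.2 hδ hφ hδL, ?_⟩
  rw [integral_transferOp (by norm_num) hg hgc (continuous_of_abs_sub_le hδ) h1 hφ.continuous
    hφ.1, hφ.2.2.2]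

end TransferOperator

section Coupling

lemma Function.Periodic.fderiv {𝕜 E F : Type*} [NontriviallyNormedField 𝕜]
    [NormedAddCommGroup E] [NormedSpace 𝕜 E] [NormedAddCommGroup F] [NormedSpace 𝕜 F]
    {f : E → F} {c : E} (hf : Periodic f c) : Periodic (fderiv 𝕜 f) c :=
  fun p => by rw [← fderiv_comp_add_right, hf.funext]

lemma exists_norm_le_of_periodic₂ {E : Type*} [NormedAddCommGroup E] {F : ℝ × ℝ → E}
    (hF : Continuous F) (h₁ : Periodic F (1, 0)) (h₂ : Periodic F (0, 1)) :
    ∃ M, ∀ p, ‖F p‖ ≤ M := by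
  obtain ⟨M, hM⟩ := ((isCompact_Icc (a := (0:ℝ)) (b := 1)).prod
    (isCompact_Icc (a := (0:ℝ)) (b := 1))).exists_bound_of_continuousOn hF.continuousOn
  refine ⟨M, fun p => ?_⟩
  have hp : p - ⌊p.1⌋ • ((1:ℝ), (0:ℝ)) - ⌊p.2⌋ • ((0:ℝ), (1:ℝ)) =
      (Int.fract p.1, Int.fract p.2) := by
    ext <;> simp
  rw [← h₁.sub_zsmul_eq ⌊p.1⌋, ← h₂.sub_zsmul_eq ⌊p.2⌋, hp]
  exact hM _ ⟨⟨Int.fract_nonneg _, (Int.fract_lt_one _).le⟩,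
    ⟨Int.fract_nonneg _, (Int.fract_lt_one _).le⟩⟩

lemma exists_bound_lipschitzWith_of_periodic₂ {F : ℝ × ℝ → ℝ} (hF : ContDiff ℝ 1 F)
    (h₁ : Periodic F (1, 0)) (h₂ : Periodic F (0, 1)) :
    ∃ M : NNReal, (∀ p, |F p| ≤ M) ∧ LipschitzWith M F := by
  obtain ⟨M₀, hM₀⟩ := exists_norm_le_of_periodic₂ hF.continuous h₁ h₂
  obtain ⟨M₁, hM₁⟩ :=
    exists_norm_le_of_periodic₂ (hF.continuous_fderiv one_ne_zero) h₁.fderiv h₂.fderiv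
  refine ⟨(max M₀ M₁).toNNReal, fun p => ?_,
    lipschitzWith_of_nnnorm_fderiv_le (hF.differentiable one_ne_zero) fun p => ?_⟩
  · exact (hM₀ p).trans ((le_max_left _ _).trans (Real.le_coe_toNNReal _))
  · rw [← NNReal.coe_le_coe, coe_nnnorm]
    exact (hM₁ p).trans ((le_max_right _ _).trans (Real.le_coe_toNNReal _))

variable {h : ℝ → ℝ → ℝ}

noncomputable def partialFst (h : ℝ → ℝ → ℝ) (x y : ℝ) : ℝ :=
  fderiv ℝ (uncurry h) (x, y) (1, 0)

lemma hasDerivAt_partialFst (hh : Differentiable ℝ (uncurry h)) (x y : ℝ) :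
    HasDerivAt (fun x => h x y) (partialFst h x y) x :=
  (hh (x, y)).hasFDerivAt.comp_hasDerivAt (f := fun x => (x, y)) x
    ((hasDerivAt_id x).prodMk (hasDerivAt_const x y))

lemma continuous_partialFst (hh : ContDiff ℝ 1 (uncurry h)) :
    Continuous (uncurry (partialFst h)) :=
  (hh.continuous_fderiv one_ne_zero).clm_apply continuous_const

lemma exists_bound_lipschitz_partialFst (hh : ContDiff ℝ 2 (uncurry h)) (hper : periodicH h) :
    ∃ M, 0 ≤ M ∧ ∀ x x' y,
      |partialFst h x y| ≤ M ∧ |partialFst h x y - partialFst h x' y| ≤ M * |x - x'| := by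
  have h₁ : Periodic (uncurry h) (1, 0) := fun ⟨x, y⟩ => by simpa using hper.1 x y
  have h₂ : Periodic (uncurry h) (0, 1) := fun ⟨x, y⟩ => by simpa using hper.2 x y
  obtain ⟨M, hbound, hlip⟩ := exists_bound_lipschitzWith_of_periodic₂
    (F := uncurry (partialFst h)) ((hh.fderiv_right (by norm_num)).clm_apply contDiff_const)
    (fun p => congrArg (· (1, 0)) (h₁.fderiv (𝕜 := ℝ) p))
    (fun p => congrArg (· (1, 0)) (h₂.fderiv (𝕜 := ℝ) p))
  refine ⟨M, M.2, fun x x' y => ⟨hbound (x, y), ?_⟩⟩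
  simpa [Real.dist_eq, Prod.dist_eq] using hlip.dist_le_mul (x, y) (x', y)

lemma hasDerivAt_integral_mul (hh : ContDiff ℝ 1 (uncurry h)) {M : ℝ}
    (hM : ∀ x y, |partialFst h x y| ≤ M) {φ : ℝ → ℝ} (hφ : Continuous φ) (x₀ : ℝ) :
    HasDerivAt (fun x => ∫ y in (0:ℝ)..1, h x y * φ y)
      (∫ y in (0:ℝ)..1, partialFst h x₀ y * φ y) x₀ := by
  have hcont x : Continuous fun y => h x y * φ y :=
    (hh.continuous.comp (Continuous.prodMk_right x)).mul hφ
  have hcont' : Continuous fun y => partialFst h x₀ y * φ y :=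
    ((continuous_partialFst hh).comp (Continuous.prodMk_right x₀)).mul hφ
  refine (intervalIntegral.hasDerivAt_integral_of_dominated_loc_of_deriv_le
    (bound := fun y => M * |φ y|) Filter.univ_mem
    (Filter.Eventually.of_forall fun x => (hcont x).aestronglyMeasurable)
    ((hcont x₀).intervalIntegrable _ _) hcont'.aestronglyMeasurable
    (ae_of_all _ fun y _ x _ => ?_) ((continuous_const.mul hφ.abs).intervalIntegrable _ _)
    (ae_of_all _ fun y _ x _ =>
      (hasDerivAt_partialFst (hh.differentiable one_ne_zero) x y).mul_const (φ y))).2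
  rw [Real.norm_eq_abs, abs_mul]
  exact mul_le_mul_of_nonneg_right (hM x y) (abs_nonneg _)

lemma gmap_add_one (hper : ∀ x y, h (x + 1) y = h x y) (ε : ℝ) (φ : ℝ → ℝ) (x : ℝ) :
    gmap h ε φ (x + 1) = gmap h ε φ x + 1 := by
  simp only [gmap, hper]
  ring

lemma exists_deriv_gmap_bounds (hh : ContDiff ℝ 2 (uncurry h)) (hper : periodicH h) :
    ∃ M, 0 ≤ M ∧ ∀ (ε L : ℝ) (φ : ℝ → ℝ), memB L φ →
      Differentiable ℝ (gmap h ε φ) ∧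
      (∀ x, |deriv (gmap h ε φ) x - 1| ≤ |ε| * M) ∧
      ∀ x y, |deriv (gmap h ε φ) x - deriv (gmap h ε φ) y| ≤ |ε| * M * |x - y| := by
  obtain ⟨M, hM0, hM⟩ := exists_bound_lipschitz_partialFst hh hper
  refine ⟨M, hM0, fun ε L φ hφ => ?_⟩
  have hP x : Continuous (partialFst h x) :=
    (continuous_partialFst (hh.of_le (by norm_num))).comp (Continuous.prodMk_right x)
  set I' := fun x => ∫ y in (0:ℝ)..1, partialFst h x y * φ y
  have hderiv x : HasDerivAt (gmap h ε φ) (1 + ε * I' x) x :=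
    (hasDerivAt_id x).add ((hasDerivAt_integral_mul (hh.of_le (by norm_num))
      (fun x y => (hM x x y).1) hφ.continuous x).const_mul ε)
  have hI'_sub x y :
      I' x - I' y = ∫ z in (0:ℝ)..1, (partialFst h x z - partialFst h y z) * φ z := by
    simp only [I', sub_mul]
    exact (intervalIntegral.integral_sub (((hP x).mul hφ.continuous).intervalIntegrable _ _)
      (((hP y).mul hφ.continuous).intervalIntegrable _ _)).symm
  refine ⟨fun x => (hderiv x).differentiableAt, fun x => ?_, fun x y => ?_⟩
  · rw [(hderiv x).deriv, add_sub_cancel_left, abs_mul]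
    exact mul_le_mul_of_nonneg_left (abs_integral_mul_le hφ.2.1 hφ.continuous hφ.2.2.2 (hP x)
      fun y => (hM x x y).1) (abs_nonneg ε)
  · rw [(hderiv x).deriv, (hderiv y).deriv, add_sub_add_left_eq_sub, ← mul_sub, abs_mul,
      mul_assoc, hI'_sub]
    exact mul_le_mul_of_nonneg_left (abs_integral_mul_le hφ.2.1 hφ.continuous hφ.2.2.2
      ((hP x).sub (hP y)) fun z => (hM x y z).2) (abs_nonneg ε)

end Coupling

/-- For `|ε| < ε₀` and every `L ≥ C|ε|`, the self-consistent transfer operator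
maps `B_L` into itself. -/
theorem stmt3 (h : ℝ → ℝ → ℝ) (hC2 : ContDiff ℝ 2 (Function.uncurry h))
    (hper : periodicH h) :
    ∃ ε₀ > (0:ℝ), ∃ C ≥ (0:ℝ), ∀ ε : ℝ, |ε| < ε₀ → ∀ L : ℝ, C * |ε| ≤ L →
      ∀ φ : ℝ → ℝ, memB L φ → memB L (Tsc h ε φ) := by
  obtain ⟨M, hM0, hM⟩ := exists_deriv_gmap_bounds hC2 hper
  -- `|ε| < ε₀` gives `|ε| M ≤ 1/10`, and `C |ε| ≤ L` gives `|ε| M ≤ L/10`.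
  refine ⟨1 / (10 * (M + 1)), by positivity, 10 * M, by positivity,
    fun ε hε L hL φ hφ => ?_⟩
  obtain ⟨hdiff, hnear, hlip⟩ := hM ε L φ hφ
  have hεM : |ε| * M ≤ 1 / 10 := by
    rw [lt_div_iff₀ (by positivity)] at hε
    nlinarith [abs_nonneg ε]
  rw [Tsc, Lop_eq_transferOp]
  refine memB_Pop (memB_transferOp hdiff (fun x => ?_) hlip (gmap_add_one hper.1 ε φ) hφ ?_)
  · linarith [(abs_le.1 (hnear x)).1]
  · nlinarith [mul_le_mul_of_nonneg_right hεM hφ.lipschitz_const_nonneg]
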